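/- With B = Jᵀ H⁻¹ Z, E = Zᵀ H⁻¹ J, and F = Jᵀ H⁻¹ J − B G⁻¹ E assumed invertible, the off-diagonal (covariance) block of the inverse of the block normal matrix satisfies F⁻¹ B G⁻¹ = (Jᵀ Ω⁻¹ J)⁻¹ Jᵀ Ω⁻¹ Z C Q Cᵀ. -/

import Mathlib

/-!
Write `P = C Q Cᵀ`, so that `Ω = H + Z P Zᵀ` and `G = P⁻¹ + Zᵀ H⁻¹ Z` is the capacitance
matrix of the Woodbury identity `Ω⁻¹ = H⁻¹ - H⁻¹ Z G⁻¹ Zᵀ H⁻¹`. Sandwiching this identity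
between `Jᵀ` and `J` shows `F = Jᵀ Ω⁻¹ J`, and the push-through identity `H⁻¹ Z G⁻¹ = Ω⁻¹ Z P`
turns `B G⁻¹ = Jᵀ H⁻¹ Z G⁻¹` into `Jᵀ Ω⁻¹ Z P`.
-/

open Matrix

namespace Matrix

section PushThrough

variable {n m α : Type*} [Fintype n] [DecidableEq n] [Fintype m] [DecidableEq m] [CommRing α]

theorem add_mul_mul_inv_mul_mul_eq (A : Matrix n n α) (U : Matrix n m α) (C : Matrix m m α)
    (V : Matrix m n α) (hA : IsUnit A) (hC : IsUnit C) (hAC : IsUnit (C⁻¹ + V * A⁻¹ * U)) :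
    (A + U * C * V)⁻¹ * U * C = A⁻¹ * U * (C⁻¹ + V * A⁻¹ * U)⁻¹ := by
  set K := C⁻¹ + V * A⁻¹ * U
  have hKC : K⁻¹ * (V * A⁻¹ * U) * C = C - K⁻¹ := by
    have hVAU : V * A⁻¹ * U = K - C⁻¹ := by simp only [K, add_sub_cancel_left]
    rw [hVAU, Matrix.mul_sub, Matrix.sub_mul, nonsing_inv_mul K ((isUnit_iff_isUnit_det K).mp hAC),
      Matrix.mul_assoc, nonsing_inv_mul C ((isUnit_iff_isUnit_det C).mp hC), Matrix.one_mul,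
      Matrix.mul_one]
  calc (A + U * C * V)⁻¹ * U * C
      = A⁻¹ * U * C - A⁻¹ * U * (K⁻¹ * (V * A⁻¹ * U) * C) := by
        rw [add_mul_mul_inv_eq_sub A U C V hA hC hAC]
        simp only [Matrix.sub_mul, Matrix.mul_assoc, K]
    _ = A⁻¹ * U * K⁻¹ := by rw [hKC, Matrix.mul_sub, sub_sub_cancel]

end PushThrough

section PosDef

variable {n m : Type*} [Fintype n] [DecidableEq n] [Fintype m] [DecidableEq m]

theorem PosDef.mul_mul_transpose_of_isUnit {Q C : Matrix m m ℝ} (hQ : Q.PosDef)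
    (hC : IsUnit C) : (C * Q * Cᵀ).PosDef := by
  simpa only [conjTranspose_eq_transpose_of_trivial] using
    hQ.mul_mul_conjTranspose_same (vecMul_injective_iff_isUnit.mpr hC)

theorem PosDef.inv_add_transpose_mul_inv_mul {H : Matrix n n ℝ} {P : Matrix m m ℝ}
    (hH : H.PosDef) (hP : P.PosDef) (Z : Matrix n m ℝ) : (P⁻¹ + Zᵀ * H⁻¹ * Z).PosDef := by
  have hZHZ := hH.inv.posSemidef.conjTranspose_mul_mul_same Z
  rw [conjTranspose_eq_transpose_of_trivial] at hZHZ
  exact hP.inv.add_posSemidef hZHZ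

end PosDef

end Matrix

theorem covariance_block_identity_right_general
    (n m k : ℕ)
    (H : Matrix (Fin n) (Fin n) ℝ) (Q : Matrix (Fin m) (Fin m) ℝ)
    (C : Matrix (Fin m) (Fin m) ℝ) (Z : Matrix (Fin n) (Fin m) ℝ)
    (J : Matrix (Fin n) (Fin k) ℝ)
    (hH : H.PosDef) (hQ : Q.PosDef) (hC : IsUnit C)
    (Ω : Matrix (Fin n) (Fin n) ℝ) (hΩ : Ω = H + Z * C * Q * Cᵀ * Zᵀ)
    (G : Matrix (Fin m) (Fin m) ℝ) (hG : G = Zᵀ * H⁻¹ * Z + C⁻¹ᵀ * Q⁻¹ * C⁻¹)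
    (B : Matrix (Fin k) (Fin m) ℝ) (hB : B = Jᵀ * H⁻¹ * Z)
    (E : Matrix (Fin m) (Fin k) ℝ) (hE : E = Zᵀ * H⁻¹ * J)
    (F : Matrix (Fin k) (Fin k) ℝ)
    (hF : F = Jᵀ * H⁻¹ * J - B * G⁻¹ * E) :
    F⁻¹ * B * G⁻¹ = (Jᵀ * Ω⁻¹ * J)⁻¹ * Jᵀ * Ω⁻¹ * Z * C * Q * Cᵀ := by
  set P := C * Q * Cᵀ
  have hPpd : P.PosDef := hQ.mul_mul_transpose_of_isUnit hC
  have hΩP : Ω = H + Z * P * Zᵀ := by simp only [hΩ, P, Matrix.mul_assoc]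
  have hGP : G = P⁻¹ + Zᵀ * H⁻¹ * Z := by
    rw [hG, add_comm, Matrix.mul_inv_rev, Matrix.mul_inv_rev, transpose_nonsing_inv,
      Matrix.mul_assoc]
  have hcap : IsUnit (P⁻¹ + Zᵀ * H⁻¹ * Z) := (hH.inv_add_transpose_mul_inv_mul hPpd Z).isUnit
  have woodbury : Ω⁻¹ = H⁻¹ - H⁻¹ * Z * G⁻¹ * Zᵀ * H⁻¹ := by
    rw [hΩP, hGP, add_mul_mul_inv_eq_sub _ _ _ _ hH.isUnit hPpd.isUnit hcap]
  have push_through : H⁻¹ * Z * G⁻¹ = Ω⁻¹ * Z * P := by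
    rw [hΩP, hGP, add_mul_mul_inv_mul_mul_eq _ _ _ _ hH.isUnit hPpd.isUnit hcap]
  have hFΩ : F = Jᵀ * Ω⁻¹ * J := by
    rw [hF, hB, hE, woodbury, Matrix.mul_sub, Matrix.sub_mul]
    simp only [Matrix.mul_assoc]
  calc F⁻¹ * B * G⁻¹ = (Jᵀ * Ω⁻¹ * J)⁻¹ * Jᵀ * (H⁻¹ * Z * G⁻¹) := by
        simp only [hFΩ, hB, Matrix.mul_assoc]
    _ = (Jᵀ * Ω⁻¹ * J)⁻¹ * Jᵀ * Ω⁻¹ * Z * C * Q * Cᵀ := by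
        simp only [push_through, P, Matrix.mul_assoc]

/-- The off-diagonal (covariance) block of the inverse of the block normal
matrix: F⁻¹ B G⁻¹ = (Jᵀ Ω⁻¹ J)⁻¹ Jᵀ Ω⁻¹ Z C Q Cᵀ. -/
theorem covariance_block_identity_right
    (n m k : ℕ)
    (H : Matrix (Fin n) (Fin n) ℝ) (Q : Matrix (Fin m) (Fin m) ℝ)
    (C : Matrix (Fin m) (Fin m) ℝ) (Z : Matrix (Fin n) (Fin m) ℝ)
    (J : Matrix (Fin n) (Fin k) ℝ)
    (hH : H.PosDef) (hQ : Q.PosDef) (hC : IsUnit C)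
    (Ω : Matrix (Fin n) (Fin n) ℝ) (hΩ : Ω = H + Z * C * Q * Cᵀ * Zᵀ)
    (G : Matrix (Fin m) (Fin m) ℝ) (hG : G = Zᵀ * H⁻¹ * Z + C⁻¹ᵀ * Q⁻¹ * C⁻¹)
    (hJ : IsUnit (Jᵀ * Ω⁻¹ * J))
    (B : Matrix (Fin k) (Fin m) ℝ) (hB : B = Jᵀ * H⁻¹ * Z)
    (E : Matrix (Fin m) (Fin k) ℝ) (hE : E = Zᵀ * H⁻¹ * J)
    (F : Matrix (Fin k) (Fin k) ℝ)
    (hF : F = Jᵀ * H⁻¹ * J - B * G⁻¹ * E)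
    (hFu : IsUnit F) :
    F⁻¹ * B * G⁻¹ = (Jᵀ * Ω⁻¹ * J)⁻¹ * Jᵀ * Ω⁻¹ * Z * C * Q * Cᵀ :=
  covariance_block_identity_right_general n m k H Q C Z J hH hQ hC Ω hΩ G hG B hB E hE F hF
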